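/- arXiv:2010.01818 — 2 statements merged into one kernel-verified Lean document; each statement's English description precedes it below -/
import Mathlib

section
/- Let G = (V, E) be a finite simple undirected graph with independence number α₁, let r : V → [0, 1], and let β > 0 be a real number. Then ∑_{v ∈ V} r(v) · ( ∏_{w ∈ N(v)} (1 − r(w)) )^β ≤ α₁ / β, where N(v) denotes the closed neighborhood of v. -/
/-!
Write `R v` for the `r`-weight of the closed neighbourhood `N[v]`. Since `1 - x ≤ e^{-x}`, the
`v`-th term is at most `r v * e^{-β R v}`, and `t e^{-t} ≤ 1` bounds this by `r v / (β R v)`.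
It remains to show the weighted Caro–Wei inequality `∑ r v / R v ≤ α₁`. Pick `v` in the support
of `r` with `R v` minimal: the vertices of `N[v]` contribute at most `∑_{w ∈ N[v]} r w / R v = 1`,
and after deleting `N[v]` (which only increases the remaining terms) induction yields an
independent set to which `v` can be added.
-/

open Finset

theorem div_le_div_of_nonneg_left_of_le {a b c : ℝ} (ha : 0 ≤ a) (hac : a ≤ c) (hcb : c ≤ b) :
    a / b ≤ a / c := by
  rcases ha.eq_or_lt with rfl | ha
  · simp
  · exact div_le_div_of_nonneg_left ha.le (ha.trans_le hac) hcb

namespace Real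

theorem prod_one_sub_le_exp_neg_sum {ι : Type*} (s : Finset ι) {x : ι → ℝ}
    (hx : ∀ i ∈ s, x i ≤ 1) : ∏ i ∈ s, (1 - x i) ≤ exp (-∑ i ∈ s, x i) := by
  rw [← sum_neg_distrib, exp_sum]
  exact prod_le_prod (fun i hi => sub_nonneg.mpr (hx i hi)) fun i _ => one_sub_le_exp_neg _

theorem mul_exp_neg_mul_le_div_div {x R β : ℝ} (hx : 0 ≤ x) (hxR : x ≤ R) (hβ : 0 < β) :
    x * exp (-(β * R)) ≤ x / R / β := by
  rcases (hx.trans hxR).eq_or_lt with rfl | hR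
  · simp [le_antisymm hxR hx]
  have hβR : β * R * exp (-(β * R)) ≤ 1 :=
    (mul_exp_neg_le_exp_neg_one _).trans (exp_le_one_iff.mpr (by norm_num))
  rw [div_div, le_div_iff₀ (by positivity), mul_comm R β]
  nlinarith

theorem mul_prod_one_sub_rpow_le_div_sum {ι : Type*} {s : Finset ι} {x : ι → ℝ} {i : ι}
    (hi : i ∈ s) (hx : ∀ j ∈ s, x j ∈ Set.Icc (0 : ℝ) 1) {β : ℝ} (hβ : 0 < β) :
    x i * (∏ j ∈ s, (1 - x j)) ^ β ≤ x i / (∑ j ∈ s, x j) / β := by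
  have hprod : (∏ j ∈ s, (1 - x j)) ^ β ≤ exp (-(β * ∑ j ∈ s, x j)) := by
    rw [show -(β * ∑ j ∈ s, x j) = -(∑ j ∈ s, x j) * β by ring, exp_mul]
    exact rpow_le_rpow (prod_nonneg fun j hj => sub_nonneg.mpr (hx j hj).2)
      (prod_one_sub_le_exp_neg_sum s fun j hj => (hx j hj).2) hβ.le
  calc x i * (∏ j ∈ s, (1 - x j)) ^ β ≤ x i * exp (-(β * ∑ j ∈ s, x j)) :=
        mul_le_mul_of_nonneg_left hprod (hx i hi).1
    _ ≤ x i / (∑ j ∈ s, x j) / β :=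
        mul_exp_neg_mul_le_div_div (hx i hi).1
          (single_le_sum (fun j hj => (hx j hj).1) hi) hβ

end Real

namespace SimpleGraph

theorem isIndepSet_insert_of_not_adj {V : Type*} {G : SimpleGraph V} {s : Set V} {v : V}
    (hs : G.IsIndepSet s) (hv : ∀ w ∈ s, ¬ G.Adj v w) : G.IsIndepSet (insert v s) :=
  hs.insert fun w hw _ => ⟨hv w hw, fun h => hv w hw h.symm⟩

variable {V : Type*} [DecidableEq V] (G : SimpleGraph V) [Fintype V] [DecidableRel G.Adj]

def nbhdWeight (q : V → ℝ) (s : Finset V) (v : V) : ℝ :=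
  ∑ w ∈ insert v (G.neighborFinset v) ∩ s, q w

variable {G} {q : V → ℝ}

theorem le_nbhdWeight (hq : ∀ v, 0 ≤ q v) {s : Finset V} {v : V} (hv : v ∈ s) :
    q v ≤ G.nbhdWeight q s v :=
  single_le_sum (fun w _ => hq w) (mem_inter.mpr ⟨mem_insert_self v _, hv⟩)

theorem nbhdWeight_mono (hq : ∀ v, 0 ≤ q v) {s s' : Finset V} (h : s ⊆ s') (v : V) :
    G.nbhdWeight q s v ≤ G.nbhdWeight q s' v :=
  sum_le_sum_of_subset_of_nonneg (inter_subset_inter_left h) fun w _ _ => hq w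

theorem sum_div_nbhdWeight_le_one (hq : ∀ v, 0 ≤ q v) {s : Finset V} {v : V}
    (hmin : ∀ w ∈ s, 0 < q w → G.nbhdWeight q s v ≤ G.nbhdWeight q s w) :
    ∑ w ∈ insert v (G.neighborFinset v) ∩ s, q w / G.nbhdWeight q s w ≤ 1 := by
  calc ∑ w ∈ insert v (G.neighborFinset v) ∩ s, q w / G.nbhdWeight q s w
      ≤ ∑ w ∈ insert v (G.neighborFinset v) ∩ s, q w / G.nbhdWeight q s v := by
        refine sum_le_sum fun w hw => ?_
        rcases (hq w).eq_or_lt with hw0 | hw0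
        · simp [← hw0]
        · exact div_le_div_of_nonneg_left_of_le (hq w)
            (single_le_sum (fun u _ => hq u) hw) (hmin w (mem_inter.mp hw).2 hw0)
    _ = G.nbhdWeight q s v / G.nbhdWeight q s v := (sum_div ..).symm
    _ ≤ 1 := div_self_le_one _

theorem exists_isIndepSet_sum_div_nbhdWeight_le (hq : ∀ v, 0 ≤ q v) (s : Finset V) :
    ∃ t ⊆ s, G.IsIndepSet t ∧ ∑ v ∈ s, q v / G.nbhdWeight q s v ≤ #t := by
  induction s using Finset.strongInduction with
  | H s ih =>
  by_cases hsupp : (s.filter (0 < q ·)).Nonempty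
  swap
  · refine ⟨∅, empty_subset s, by simp, ?_⟩
    have hzero : ∀ v ∈ s, q v = 0 := fun v hv =>
      ((hq v).eq_or_lt.resolve_right fun h => hsupp ⟨v, mem_filter.mpr ⟨hv, h⟩⟩).symm
    rw [sum_eq_zero fun v hv => by rw [hzero v hv, zero_div], card_empty, Nat.cast_zero]
  obtain ⟨v, hv, hmin⟩ := exists_min_image _ (G.nbhdWeight q s) hsupp
  have hvs : v ∈ s := (mem_filter.mp hv).1
  set A := insert v (G.neighborFinset v) ∩ s
  have hvA : v ∈ A := mem_inter.mpr ⟨mem_insert_self v _, hvs⟩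
  obtain ⟨t, hts, ht, hsum⟩ := ih (s \ A) (sdiff_ssubset inter_subset_right ⟨v, hvA⟩)
  have hvt : v ∉ t := fun h => (mem_sdiff.mp (hts h)).2 hvA
  have hnadj : ∀ w ∈ (t : Set V), ¬ G.Adj v w := fun w hw hvw =>
    (mem_sdiff.mp (hts hw)).2 (mem_inter.mpr
      ⟨mem_insert_of_mem ((G.mem_neighborFinset v w).mpr hvw), (mem_sdiff.mp (hts hw)).1⟩)
  refine ⟨insert v t, insert_subset hvs (hts.trans sdiff_subset), ?_, ?_⟩
  · rw [coe_insert]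
    exact isIndepSet_insert_of_not_adj ht hnadj
  have hrest : ∑ w ∈ s \ A, q w / G.nbhdWeight q s w ≤ #t :=
    (sum_le_sum fun w hw => div_le_div_of_nonneg_left_of_le (hq w) (le_nbhdWeight hq hw)
      (nbhdWeight_mono hq sdiff_subset w)).trans hsum
  have hA := sum_div_nbhdWeight_le_one hq fun w hw hw0 => hmin w (mem_filter.mpr ⟨hw, hw0⟩)
  rw [← sum_sdiff (inter_subset_right : A ⊆ s), card_insert_of_notMem hvt]
  push_cast
  linarith

end SimpleGraph

theorem stmt12 {V : Type*} [Fintype V] [DecidableEq V] (G : SimpleGraph V) [DecidableRel G.Adj]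
    (α₁ : ℕ)
    (hα : IsGreatest
      {n : ℕ | ∃ s : Finset V, s.card = n ∧ ∀ v ∈ s, ∀ w ∈ s, ¬ G.Adj v w} α₁)
    (r : V → ℝ) (hr : ∀ v, r v ∈ Set.Icc (0 : ℝ) 1)
    (β : ℝ) (hβ : 0 < β) :
    ∑ v, r v * (∏ w ∈ insert v (G.neighborFinset v), (1 - r w)) ^ β ≤ (α₁ : ℝ) / β := by
  obtain ⟨t, -, ht, hsum⟩ :=
    G.exists_isIndepSet_sum_div_nbhdWeight_le (fun v => (hr v).1) univ
  have hcaroWei : ∑ v, r v / G.nbhdWeight r univ v ≤ α₁ :=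
    hsum.trans (Nat.cast_le.mpr (hα.2 ⟨t, rfl, fun v hv w hw hvw => ht hv hw hvw.ne hvw⟩))
  calc ∑ v, r v * (∏ w ∈ insert v (G.neighborFinset v), (1 - r w)) ^ β
      ≤ ∑ v, r v / G.nbhdWeight r univ v / β := by
        refine sum_le_sum fun v _ => ?_
        simpa only [SimpleGraph.nbhdWeight, inter_univ] using
          Real.mul_prod_one_sub_rpow_le_div_sum (mem_insert_self v _) (fun w _ => hr w) hβ
    _ = (∑ v, r v / G.nbhdWeight r univ v) / β := (sum_div ..).symm
    _ ≤ α₁ / β := by gcongr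
end

section
/- Let G = (V, E) be a finite simple undirected graph with independence number α₁, let k ≥ 1 and m ≥ 1 be integers, let q : V → [0, 1], and let x : {1,...,k} × V → [0, 1] satisfy ∑_{i=1}^k x(i, v) ≤ m for every v ∈ V. For each i ∈ {1,...,k} and v ∈ V define B̄(i, v) := 1 − ∏_{w ∈ N(v)} (1 − x(i, w)·q(w)), where N(v) is the closed neighborhood of v (with the convention that a summand x(i,v)·q(v)/B̄(i,v) is 0 when x(i,v)·q(v) = 0). Then ∑_{i=1}^k ∑_{v ∈ V} x(i, v)·q(v) / B̄(i, v) ≤ (1/(1 − e^{−1})) · ( k·α₁ + m·∑_{v ∈ V} q(v) ). -/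
/-!
Fix a round `i` and write `p v = x(i,v) q(v)` and `P v = ∑_{w ∈ N(v)} p w`. Since
`∏ (1 - p w) ≤ exp (-P v)` and `1 - exp (-s)` is concave, `B̄(i,v) ≥ (1 - e⁻¹) min 1 (P v)`,
hence `p v / B̄(i,v) ≤ (1 - e⁻¹)⁻¹ (p v / P v + p v)`. The sum of `p v / P v` is at most `α₁`:
a vertex `u` minimising `P` contributes, together with its neighbours, at most `1`, and removing
its closed neighbourhood only decreases the remaining denominators, so induction produces an
independent set containing `u` of size at least the sum. Summing over the rounds, the terms
`p v` add up to at most `m ∑ q v`.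
-/

open Finset Real

lemma div_le_div_of_le_of_le {a b c : ℝ} (ha : 0 ≤ a) (hab : a ≤ b) (hbc : b ≤ c) :
    a / c ≤ a / b := by
  rcases ha.eq_or_lt with rfl | ha
  · simp
  · exact div_le_div_of_nonneg_left ha.le (ha.trans_le hab) hbc

lemma Finset.sum_div_le_one_of_sum_le {ι : Type*} {s : Finset ι} {a d : ι → ℝ}
    (ha : ∀ i ∈ s, 0 ≤ a i) (hd : ∀ i ∈ s, ∑ j ∈ s, a j ≤ d i) :
    ∑ i ∈ s, a i / d i ≤ 1 :=
  calc ∑ i ∈ s, a i / d i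
      ≤ ∑ i ∈ s, a i / ∑ j ∈ s, a j :=
        sum_le_sum fun i hi => div_le_div_of_le_of_le (ha i hi) (single_le_sum ha hi) (hd i hi)
    _ = (∑ j ∈ s, a j) / ∑ j ∈ s, a j := (sum_div ..).symm
    _ ≤ 1 := div_self_le_one _

lemma div_min_one_le_div_add {a s : ℝ} (ha : 0 ≤ a) (hs : 0 ≤ s) :
    a / min 1 s ≤ a / s + a := by
  rcases min_cases 1 s with ⟨h, -⟩ | ⟨h, -⟩ <;> rw [h]
  · rw [div_one]
    linarith [div_nonneg ha hs]
  · linarith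

lemma Real.one_sub_exp_neg_one_mul_min_le {s : ℝ} (hs : 0 ≤ s) :
    (1 - exp (-1)) * min 1 s ≤ 1 - exp (-s) := by
  rcases le_total s 1 with hs1 | hs1
  · rw [min_eq_right hs1]
    have hchord := convexOn_exp.2 (Set.mem_univ 0) (Set.mem_univ (-1))
      (sub_nonneg.2 hs1) hs (sub_add_cancel 1 s)
    simp only [smul_eq_mul, mul_zero, zero_add, exp_zero, mul_neg, mul_one] at hchord
    linarith
  · rw [min_eq_left hs1, mul_one]
    linarith [exp_le_exp.2 (neg_le_neg hs1)]

lemma Real.prod_one_sub_le_exp_neg_sum_s13 {ι : Type*} (s : Finset ι) {p : ι → ℝ}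
    (hp : ∀ i ∈ s, p i ≤ 1) : ∏ i ∈ s, (1 - p i) ≤ exp (-∑ i ∈ s, p i) :=
  calc ∏ i ∈ s, (1 - p i)
      ≤ ∏ i ∈ s, exp (-p i) :=
        prod_le_prod (fun i hi => sub_nonneg.2 (hp i hi)) fun i _ => one_sub_le_exp_neg _
    _ = exp (-∑ i ∈ s, p i) := by rw [← sum_neg_distrib, exp_sum]

lemma Real.one_sub_exp_neg_one_mul_min_le_one_sub_prod {ι : Type*} (s : Finset ι) {p : ι → ℝ}
    (hp : ∀ i ∈ s, p i ∈ Set.Icc (0 : ℝ) 1) :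
    (1 - exp (-1)) * min 1 (∑ i ∈ s, p i) ≤ 1 - ∏ i ∈ s, (1 - p i) := by
  have hsum := one_sub_exp_neg_one_mul_min_le (sum_nonneg fun i hi => (hp i hi).1)
  linarith [prod_one_sub_le_exp_neg_sum_s13 s fun i hi => (hp i hi).2]

lemma div_le_one_div_mul_div_add {c a s b : ℝ} (hc : 0 < c) (ha : 0 ≤ a) (has : a ≤ s)
    (hb : c * min 1 s ≤ b) : a / b ≤ 1 / c * (a / s + a) := by
  rcases ha.eq_or_lt with rfl | ha
  · simp
  have hmin : 0 < min 1 s := lt_min one_pos (ha.trans_le has)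
  calc a / b
      ≤ a / (c * min 1 s) := div_le_div_of_nonneg_left ha.le (by positivity) hb
    _ = 1 / c * (a / min 1 s) := by field_simp
    _ ≤ 1 / c * (a / s + a) := by
        gcongr
        exact div_min_one_le_div_add ha.le (ha.le.trans has)

namespace SimpleGraph

variable {V : Type*} [Fintype V] [DecidableEq V] (G : SimpleGraph V) [DecidableRel G.Adj]

theorem exists_isIndepSet_sum_div_sum_closedNbhd_le (a : V → ℝ) (ha : ∀ v, 0 ≤ a v)
    (S : Finset V) :
    ∃ T ⊆ S, G.IsIndepSet (T : Set V) ∧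
      ∑ v ∈ S, a v / ∑ w ∈ insert v (G.neighborFinset v) ∩ S, a w ≤ T.card := by
  induction S using Finset.strongInduction with
  | H S ih =>
  rcases S.eq_empty_or_nonempty with rfl | hS
  · exact ⟨∅, empty_subset _, by simp, by simp⟩
  set d : Finset V → V → ℝ := fun S v => ∑ w ∈ insert v (G.neighborFinset v) ∩ S, a w
  obtain ⟨u, huS, hu⟩ := S.exists_min_image (d S) hS
  set N := insert u (G.neighborFinset u)
  have huN : u ∈ N := mem_insert_self _ _
  obtain ⟨T, hTS, hT, hsum⟩ := ih (S \ N) ⟨sdiff_subset, fun h => (mem_sdiff.1 (h huS)).2 huN⟩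
  have huT : ∀ w ∈ T, w ∉ N := fun w hw => (mem_sdiff.1 (hTS hw)).2
  refine ⟨insert u T, insert_subset huS (hTS.trans sdiff_subset), ?_, ?_⟩
  · rw [coe_insert]
    refine hT.insert fun w hw _ => ?_
    have hwN := huT w hw
    simp only [N, mem_insert, not_or, mem_neighborFinset] at hwN
    exact ⟨hwN.2, fun h => hwN.2 h.symm⟩
  have hnear : ∑ v ∈ S ∩ N, a v / d S v ≤ 1 :=
    sum_div_le_one_of_sum_le (fun v _ => ha v) fun v hv => by
      rw [inter_comm]
      exact hu v (mem_inter.1 hv).1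
  have hfar : ∑ v ∈ S \ N, a v / d S v ≤ ∑ v ∈ S \ N, a v / d (S \ N) v :=
    sum_le_sum fun v hv => div_le_div_of_le_of_le (ha v)
      (single_le_sum (fun w _ => ha w) (mem_inter.2 ⟨mem_insert_self _ _, hv⟩))
      (sum_le_sum_of_subset_of_nonneg (inter_subset_inter_left sdiff_subset) fun w _ _ => ha w)
  calc ∑ v ∈ S, a v / d S v
      = ∑ v ∈ S ∩ N, a v / d S v + ∑ v ∈ S \ N, a v / d S v := (sum_inter_add_sum_sdiff ..).symm
    _ ≤ 1 + T.card := add_le_add hnear (hfar.trans hsum)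
    _ = (insert u T).card := by
        rw [card_insert_of_notMem fun h => huT u h huN]
        push_cast
        ring

theorem exists_isIndepSet_sum_div_one_sub_prod_le (p : V → ℝ)
    (hp : ∀ v, p v ∈ Set.Icc (0 : ℝ) 1) :
    ∃ T : Finset V, G.IsIndepSet (T : Set V) ∧
      ∑ v, p v / (1 - ∏ w ∈ insert v (G.neighborFinset v), (1 - p w))
        ≤ 1 / (1 - exp (-1)) * (T.card + ∑ v, p v) := by
  obtain ⟨T, -, hT, hsum⟩ := G.exists_isIndepSet_sum_div_sum_closedNbhd_le p (fun v => (hp v).1) univ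
  simp only [inter_univ] at hsum
  have hc : 0 < 1 - exp (-1) := sub_pos.2 (exp_lt_one_iff.2 (by norm_num))
  refine ⟨T, hT, ?_⟩
  calc ∑ v, p v / (1 - ∏ w ∈ insert v (G.neighborFinset v), (1 - p w))
      ≤ ∑ v, 1 / (1 - exp (-1)) * (p v / ∑ w ∈ insert v (G.neighborFinset v), p w + p v) :=
        sum_le_sum fun v _ => div_le_one_div_mul_div_add hc (hp v).1
          (single_le_sum (fun w _ => (hp w).1) (mem_insert_self _ _))
          (one_sub_exp_neg_one_mul_min_le_one_sub_prod _ fun w _ => hp w)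
    _ = 1 / (1 - exp (-1)) * (∑ v, p v / ∑ w ∈ insert v (G.neighborFinset v), p w + ∑ v, p v) := by
        rw [← mul_sum, sum_add_distrib]
    _ ≤ 1 / (1 - exp (-1)) * (T.card + ∑ v, p v) := by gcongr

end SimpleGraph

theorem stmt13_general {V : Type*} [Fintype V] [DecidableEq V] (G : SimpleGraph V) [DecidableRel G.Adj]
    (α₁ : ℕ)
    (hα : IsGreatest
      {n : ℕ | ∃ s : Finset V, s.card = n ∧ ∀ v ∈ s, ∀ w ∈ s, ¬ G.Adj v w} α₁)
    (k m : ℕ)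
    (q : V → ℝ) (hq : ∀ v, q v ∈ Set.Icc (0 : ℝ) 1)
    (x : Fin k → V → ℝ) (hx : ∀ i v, x i v ∈ Set.Icc (0 : ℝ) 1)
    (hxm : ∀ v, ∑ i, x i v ≤ (m : ℝ))
    (B : Fin k → V → ℝ)
    (hBdef : ∀ i v, B i v = 1 - ∏ w ∈ insert v (G.neighborFinset v), (1 - x i w * q w)) :
    ∑ i, ∑ v, x i v * q v / B i v
      ≤ (1 / (1 - Real.exp (-1))) * ((k : ℝ) * α₁ + (m : ℝ) * ∑ v, q v) := by
  obtain rfl : B = _ := funext fun i => funext (hBdef i)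
  choose T hT hround using fun i => G.exists_isIndepSet_sum_div_one_sub_prod_le
    (fun v => x i v * q v) fun v => ⟨mul_nonneg (hx i v).1 (hq v).1,
      mul_le_one₀ (hx i v).2 (hq v).1 (hq v).2⟩
  have hTα : ∀ i, ((T i).card : ℝ) ≤ α₁ := fun i => by
    refine Nat.cast_le.2 (hα.2 ⟨T i, rfl, fun v hv w hw => ?_⟩)
    obtain rfl | hne := eq_or_ne v w
    · exact G.irrefl
    · exact hT i hv hw hne
  have hload : ∑ i, ∑ v, x i v * q v ≤ m * ∑ v, q v := by
    rw [sum_comm, mul_sum]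
    exact sum_le_sum fun v _ => by
      rw [← sum_mul]
      exact mul_le_mul_of_nonneg_right (hxm v) (hq v).1
  calc ∑ i, ∑ v, x i v * q v / _
      ≤ ∑ i, 1 / (1 - exp (-1)) * ((T i).card + ∑ v, x i v * q v) := sum_le_sum fun i _ => hround i
    _ = 1 / (1 - exp (-1)) * (∑ i, ((T i).card : ℝ) + ∑ i, ∑ v, x i v * q v) := by
        rw [← mul_sum, sum_add_distrib]
    _ ≤ 1 / (1 - exp (-1)) * (k * α₁ + m * ∑ v, q v) := by
        have hc : 0 < 1 - exp (-1) := sub_pos.2 (exp_lt_one_iff.2 (by norm_num))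
        have hcard : ∑ i, ((T i).card : ℝ) ≤ k * α₁ := by
          simpa using sum_le_sum fun i (_ : i ∈ univ) => hTα i
        gcongr

theorem stmt13 {V : Type*} [Fintype V] [DecidableEq V] (G : SimpleGraph V) [DecidableRel G.Adj]
    (α₁ : ℕ)
    (hα : IsGreatest
      {n : ℕ | ∃ s : Finset V, s.card = n ∧ ∀ v ∈ s, ∀ w ∈ s, ¬ G.Adj v w} α₁)
    (k m : ℕ) (hk : 1 ≤ k) (hm : 1 ≤ m)
    (q : V → ℝ) (hq : ∀ v, q v ∈ Set.Icc (0 : ℝ) 1)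
    (x : Fin k → V → ℝ) (hx : ∀ i v, x i v ∈ Set.Icc (0 : ℝ) 1)
    (hxm : ∀ v, ∑ i, x i v ≤ (m : ℝ))
    (B : Fin k → V → ℝ)
    (hBdef : ∀ i v, B i v = 1 - ∏ w ∈ insert v (G.neighborFinset v), (1 - x i w * q w)) :
    ∑ i, ∑ v, x i v * q v / B i v
      ≤ (1 / (1 - Real.exp (-1))) * ((k : ℝ) * α₁ + (m : ℝ) * ∑ v, q v) :=
  stmt13_general G α₁ hα k m q hq x hx hxm B hBdef
end
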